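/- arXiv:1711.06740 — 2 statements merged into one kernel-verified Lean document; each statement's English description precedes it below -/
import Mathlib

section
/- Let V be a finite set with a symmetric neighbor relation N (edges of an undirected graph, no self-loops) such that every node has at least one neighbor, and let τ : V × V → ℝ satisfy τ(v,u) ≥ τ_min > 0 whenever u ∈ N(v). Define c_e(S) = Σ_{v ∈ S_p} max_{u ∈ S ∩ N(v)} τ(v,u) + Σ_{v ∈ S \ S_p} min_{u ∈ N(v)} τ(v,u), where S_p = {v ∈ S : S ∩ N(v) ≠ ∅}. Then c_e is strictly monotone: for all S ⊆ V and v ∉ S, c_e(S ∪ {v}) ≥ c_e(S) + τ_min > c_e(S). -/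
/-!
Adding a node `v` to `S` only enlarges each set `S ∩ N w`, so no node of `S` gets cheaper: a
maximum over a larger set is larger, and a node that acquires its first peer `v` moves from the
minimum over all neighbours to a maximum over a set containing the neighbour `v`. The new node `v`
itself pays some `τ v u` with `u ∈ N v`, hence at least `τ_min`.
-/

namespace PeerPrediction

variable {V β : Type*} [DecidableEq V] [Lattice β]
  (N : V → Finset V) (hN : ∀ v, (N v).Nonempty) (τ : V → V → β)

noncomputable def peerCost (S : Finset V) (w : V) : β :=
  if h : (S ∩ N w).Nonempty then (S ∩ N w).sup' h (τ w) else (N w).inf' (hN w) (τ w)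

theorem peerCost_mono {S T : Finset V} (hST : S ⊆ T) (w : V) :
    peerCost N hN τ S w ≤ peerCost N hN τ T w := by
  have hsub : S ∩ N w ⊆ T ∩ N w := Finset.inter_subset_inter hST le_rfl
  unfold peerCost
  by_cases hS : (S ∩ N w).Nonempty
  · rw [dif_pos hS, dif_pos (hS.mono hsub)]
    exact Finset.sup'_mono _ hsub hS
  rw [dif_neg hS]
  split_ifs with hT
  · obtain ⟨u, hu⟩ := hT
    calc (N w).inf' (hN w) (τ w) ≤ τ w u := Finset.inf'_le _ (Finset.mem_inter.1 hu).2
      _ ≤ _ := Finset.le_sup' _ hu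
  · exact le_rfl

theorem le_peerCost {b : β} {w : V} (hb : ∀ u ∈ N w, b ≤ τ w u) (S : Finset V) :
    b ≤ peerCost N hN τ S w := by
  unfold peerCost
  split_ifs with h
  · obtain ⟨u, hu⟩ := h
    exact (hb u (Finset.mem_inter.1 hu).2).trans (Finset.le_sup' _ hu)
  · exact Finset.le_inf' _ _ hb

end PeerPrediction

open PeerPrediction in
theorem ce_strictly_monotone_general {V : Type*} [DecidableEq V]
    (N : V → Finset V)
    (hN : ∀ v, (N v).Nonempty)
    (τ : V → V → ℝ) (τ_min : ℝ) (hτmin : 0 < τ_min)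
    (hτ : ∀ v u, u ∈ N v → τ_min ≤ τ v u)
    (ce : Finset V → ℝ)
    (hce : ∀ S : Finset V, ce S = ∑ v ∈ S,
      (if h : (S ∩ N v).Nonempty then (S ∩ N v).sup' h (fun u => τ v u)
       else (N v).inf' (hN v) (fun u => τ v u)))
    (S : Finset V) (v : V) (hv : v ∉ S) :
    ce (insert v S) ≥ ce S + τ_min ∧ ce S + τ_min > ce S := by
  have hce' (T : Finset V) : ce T = ∑ w ∈ T, peerCost N hN τ T w := hce T
  have hstep : ce S + τ_min ≤ ce (insert v S) := by
    rw [hce', hce', Finset.sum_insert hv, add_comm _ τ_min]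
    exact add_le_add (le_peerCost N hN τ (hτ v) _)
      (Finset.sum_le_sum fun w _ => peerCost_mono N hN τ (Finset.subset_insert v S) w)
  exact ⟨hstep, lt_add_of_pos_right _ hτmin⟩

theorem ce_strictly_monotone {V : Type*} [Fintype V] [DecidableEq V]
    (N : V → Finset V) (hsym : ∀ v u, u ∈ N v → v ∈ N u)
    (hirr : ∀ v, v ∉ N v) (hN : ∀ v, (N v).Nonempty)
    (τ : V → V → ℝ) (τ_min : ℝ) (hτmin : 0 < τ_min)
    (hτ : ∀ v u, u ∈ N v → τ_min ≤ τ v u)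
    (ce : Finset V → ℝ)
    (hce : ∀ S : Finset V, ce S = ∑ v ∈ S,
      (if h : (S ∩ N v).Nonempty then (S ∩ N v).sup' h (fun u => τ v u)
       else (N v).inf' (hN v) (fun u => τ v u)))
    (S : Finset V) (v : V) (hv : v ∉ S) :
    ce (insert v S) ≥ ce S + τ_min ∧ ce S + τ_min > ce S :=
  ce_strictly_monotone_general N hN τ τ_min hτmin hτ ce hce S v hv
end

section
/- Let G' = (V, E') be an undirected graph, 0 < τ_min < τ_max, budget B = |V|·τ_min with τ_max > B. Define payments on the complete graph on V by τ(v,u) = τ_min if {v,u} ∈ E' and τ(v,u) = τ_max otherwise, and let c_e be the extended cost function for the complete peer graph. Then a set S ⊆ V with |S| ≥ 2 satisfies c_e(S) ≤ B if and only if S is a clique in G'. -/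
/-! With the complete peer graph the peers of `v` inside `S` are `S.erase v`, so every node of `S`
pays the largest of its payments to the other members of `S`. If `S` is a clique all these
maxima are `τ_min`, giving `ce S ≤ |S| τ_min ≤ B`; otherwise a single term is `τ_max > B`. -/

open Finset

namespace Finset

variable {V M : Type*} [DecidableEq V] {S : Finset V} {τ : V → V → M}

theorem sum_sup'_erase_le_card_nsmul [AddCommMonoid M] [SemilatticeSup M] [IsOrderedAddMonoid M]
    (hS : S.Nontrivial) {a : M} (h : ∀ v ∈ S, ∀ u ∈ S, v ≠ u → τ v u ≤ a) :
    ∑ v ∈ S, (S.erase v).sup' hS.erase_nonempty (τ v) ≤ #S • a :=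
  sum_le_card_nsmul _ _ _ fun v hv =>
    sup'_le _ _ fun u hu => h v hv u (mem_of_mem_erase hu) (ne_of_mem_erase hu).symm

theorem le_sum_sup'_erase [AddCommMonoid M] [SemilatticeSup M] [IsOrderedAddMonoid M]
    (hS : S.Nontrivial) (hτ : ∀ v u, 0 ≤ τ v u) {v u : V} (hv : v ∈ S) (hu : u ∈ S)
    (hvu : v ≠ u) :
    τ v u ≤ ∑ w ∈ S, (S.erase w).sup' hS.erase_nonempty (τ w) := by
  have hterm_nonneg : ∀ w ∈ S, 0 ≤ (S.erase w).sup' hS.erase_nonempty (τ w) := by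
    intro w _
    obtain ⟨x, hx⟩ := hS.erase_nonempty (a := w)
    exact (hτ w x).trans (le_sup' _ hx)
  calc τ v u ≤ (S.erase v).sup' hS.erase_nonempty (τ v) := le_sup' _ (mem_erase.mpr ⟨hvu.symm, hu⟩)
    _ ≤ _ := single_le_sum hterm_nonneg hv

end Finset

theorem clique_reduction_general {V : Type*} [Fintype V] [DecidableEq V]
    (E' : V → V → Prop) [DecidableRel E']
    (τ_min τ_max : ℝ) (hτmin : 0 < τ_min) (hlt : τ_min < τ_max)
    (B : ℝ) (hB : B = (Fintype.card V : ℝ) * τ_min) (hτmax : B < τ_max)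
    (τ : V → V → ℝ)
    (hτ : ∀ v u, τ v u = if E' v u then τ_min else τ_max)
    (N : V → Finset V) (hNdef : ∀ v, N v = Finset.univ.erase v)
    (hN : ∀ v, (N v).Nonempty)
    (ce : Finset V → ℝ)
    (hce : ∀ S : Finset V, ce S = ∑ v ∈ S,
      (if h : (S ∩ N v).Nonempty then (S ∩ N v).sup' h (fun u => τ v u)
       else (N v).inf' (hN v) (fun u => τ v u)))
    (S : Finset V) (hS : 2 ≤ S.card) :
    ce S ≤ B ↔ ∀ v ∈ S, ∀ u ∈ S, v ≠ u → E' v u := by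
  have hS' : S.Nontrivial := one_lt_card_iff_nontrivial.mp hS
  have hce_peers : ce S = ∑ v ∈ S, (S.erase v).sup' hS'.erase_nonempty (τ v) := by
    simp only [hce, hNdef, inter_erase, inter_univ, dif_pos hS'.erase_nonempty]
  have hτ_nonneg : ∀ v u, 0 ≤ τ v u := fun v u => by rw [hτ]; split_ifs <;> linarith
  constructor
  · intro hle v hv u hu hvu
    by_contra hE
    have hpay := le_sum_sup'_erase hS' hτ_nonneg hv hu hvu
    rw [hτ, if_neg hE, ← hce_peers] at hpay
    linarith
  · intro hclique
    calc ce S ≤ #S • τ_min := hce_peers ▸ sum_sup'_erase_le_card_nsmul hS'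
          fun v hv u hu hvu => (hτ v u).trans_le (by rw [if_pos (hclique v hv u hu hvu)])
      _ ≤ B := by
        rw [nsmul_eq_mul, hB]
        gcongr
        exact card_le_univ S

theorem clique_reduction {V : Type*} [Fintype V] [DecidableEq V]
    (hcard : 1 < Fintype.card V)
    (E' : V → V → Prop) [DecidableRel E']
    (hEsym : ∀ v u, E' v u → E' u v) (hEirr : ∀ v, ¬ E' v v)
    (τ_min τ_max : ℝ) (hτmin : 0 < τ_min) (hlt : τ_min < τ_max)
    (B : ℝ) (hB : B = (Fintype.card V : ℝ) * τ_min) (hτmax : B < τ_max)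
    (τ : V → V → ℝ)
    (hτ : ∀ v u, τ v u = if E' v u then τ_min else τ_max)
    (N : V → Finset V) (hNdef : ∀ v, N v = Finset.univ.erase v)
    (hN : ∀ v, (N v).Nonempty)
    (ce : Finset V → ℝ)
    (hce : ∀ S : Finset V, ce S = ∑ v ∈ S,
      (if h : (S ∩ N v).Nonempty then (S ∩ N v).sup' h (fun u => τ v u)
       else (N v).inf' (hN v) (fun u => τ v u)))
    (S : Finset V) (hS : 2 ≤ S.card) :
    ce S ≤ B ↔ ∀ v ∈ S, ∀ u ∈ S, v ≠ u → E' v u :=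
  clique_reduction_general E' τ_min τ_max hτmin hlt B hB hτmax τ hτ N hNdef hN ce hce S hS
end
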